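/- Let (Λ,d) be a locally convex row-finite k-graph and {s_λ} a family of partial isometries satisfying Cuntz-Krieger relations (1)-(3). Then relation (4) (s_v = Σ_{λ∈Λ^{≤m}(v)} s_λ s_λ* for all v and m∈ℕ^k) holds if and only if the edge relations hold: s_v = Σ_{λ∈Λ^{e_i}(v)} s_λ s_λ* for all v∈Λ^0 and all i∈{1,…,k} with Λ^{e_i}(v)≠∅. -/

import Mathlib

open scoped ENNReal

/-- A `k`-graph: a countable category `Λ` together with a degree functor
`d : Λ → ℕ^k` satisfying the unique factorisation property. -/
structure KGraph (k : ℕ) where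
  Obj : Type
  Path : Type
  countable_path : Countable Path
  r : Path → Obj
  s : Path → Obj
  ι : Obj → Path
  comp : (μ ν : Path) → s μ = r ν → Path
  d : Path → (Fin k → ℕ)
  r_ι : ∀ v, r (ι v) = v
  s_ι : ∀ v, s (ι v) = v
  d_ι : ∀ v, d (ι v) = 0
  r_comp : ∀ μ ν h, r (comp μ ν h) = r μ
  s_comp : ∀ μ ν h, s (comp μ ν h) = s ν
  d_comp : ∀ μ ν h, d (comp μ ν h) = d μ + d ν
  comp_ι_left : ∀ μ (h : s (ι (r μ)) = r μ), comp (ι (r μ)) μ h = μ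
  comp_ι_right : ∀ μ (h : s μ = r (ι (s μ))), comp μ (ι (s μ)) h = μ
  comp_assoc : ∀ μ ν ξ (h1 : s μ = r ν) (h2 : s ν = r ξ)
      (h3 : s (comp μ ν h1) = r ξ) (h4 : s μ = r (comp ν ξ h2)),
      comp (comp μ ν h1) ξ h3 = comp μ (comp ν ξ h2) h4
  factor : ∀ lam (m n : Fin k → ℕ), d lam = m + n →
      ∃! p : Path × Path, ∃ h : s p.1 = r p.2,
        comp p.1 p.2 h = lam ∧ d p.1 = m ∧ d p.2 = n

namespace KGraph

/-- The standard generator `e_i` of `ℕ^k`. -/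
def e (k : ℕ) (i : Fin k) : Fin k → ℕ := Pi.single i 1

variable {k : ℕ} (Λ : KGraph k)

/-- `Λ^m`, the paths of degree `m`. -/
def degSet (m : Fin k → ℕ) : Set Λ.Path := {lam | Λ.d lam = m}

/-- `Λ^m(v)`, the paths of degree `m` with range `v`. -/
def degAt (m : Fin k → ℕ) (v : Λ.Obj) : Set Λ.Path :=
  {lam | Λ.d lam = m ∧ Λ.r lam = v}

/-- `Λ^{≤ q}`: paths `λ` with `d λ ≤ q` which cannot be extended within degree `q`. -/
def le (q : Fin k → ℕ) : Set Λ.Path :=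
  {lam | Λ.d lam ≤ q ∧
    ∀ i : Fin k, Λ.d lam + e k i ≤ q → Λ.degAt (e k i) (Λ.s lam) = ∅}

/-- `Λ^{≤ q}(v)`. -/
def leAt (q : Fin k → ℕ) (v : Λ.Obj) : Set Λ.Path :=
  {lam | lam ∈ Λ.le q ∧ Λ.r lam = v}

/-- Row-finiteness: each `Λ^m(v)` is finite. -/
def RowFinite : Prop := ∀ (v : Λ.Obj) (m : Fin k → ℕ), (Λ.degAt m v).Finite

/-- No sources: each `Λ^m(v)` is nonempty. -/
def NoSources : Prop := ∀ (v : Λ.Obj) (m : Fin k → ℕ), (Λ.degAt m v).Nonempty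

/-- Local convexity. -/
def LocallyConvex : Prop :=
  ∀ (v : Λ.Obj) (i j : Fin k), i ≠ j →
    ∀ lam μ, lam ∈ Λ.degAt (e k i) v → μ ∈ Λ.degAt (e k j) v →
      (Λ.degAt (e k j) (Λ.s lam)).Nonempty ∧ (Λ.degAt (e k i) (Λ.s μ)).Nonempty

section CK

variable {A : Type} [Ring A] [StarRing A]

/-- Cuntz-Krieger relations (1)-(3). -/
structure IsCK13 (S : Λ.Path → A) : Prop where
  proj : ∀ v, S (Λ.ι v) * S (Λ.ι v) = S (Λ.ι v)
  selfadj : ∀ v, star (S (Λ.ι v)) = S (Λ.ι v)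
  orth : ∀ v w, v ≠ w → S (Λ.ι v) * S (Λ.ι w) = 0
  mul : ∀ μ ν (h : Λ.s μ = Λ.r ν), S (Λ.comp μ ν h) = S μ * S ν
  src : ∀ lam, star (S lam) * S lam = S (Λ.ι (Λ.s lam))

/-- A Cuntz-Krieger `Λ`-family: relations (1)-(4). -/
structure IsCKFamily (S : Λ.Path → A) extends IsCK13 Λ S : Prop where
  sum : ∀ (v : Λ.Obj) (m : Fin k → ℕ),
    S (Λ.ι v) = ∑ᶠ lam ∈ Λ.leAt m v, S lam * star (S lam)

end CK

/-- Hereditary subsets of `Λ^0`. -/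
def Hereditary (H : Set Λ.Obj) : Prop :=
  ∀ lam : Λ.Path, Λ.r lam ∈ H → Λ.s lam ∈ H

/-- The operator `Σ` used in the inductive construction of the saturation. -/
def Sig (F : Set Λ.Obj) : Set Λ.Obj :=
  ⋃ i : Fin k, {v | ∀ lam ∈ Λ.leAt (e k i) v, Λ.s lam ∈ F}

/-- Saturated subsets of `Λ^0`. -/
def Saturated (H : Set Λ.Obj) : Prop :=
  ∀ (v : Λ.Obj) (i : Fin k), (∀ lam ∈ Λ.leAt (e k i) v, Λ.s lam ∈ H) → v ∈ H

/-- The saturation: smallest saturated set containing `H`. -/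
def saturation (H : Set Λ.Obj) : Set Λ.Obj :=
  ⋂₀ {S | Λ.Saturated S ∧ H ⊆ S}

end KGraph

/-- A boundary path: a degree-preserving graph morphism `x : Ω_{k,m} → Λ`
for some `m ∈ (ℕ ∪ {∞})^k`, such that whenever `p + e_i ≰ m`, the vertex `x(p)`
receives no edges of degree `e_i`. -/
structure BPath {k : ℕ} (Λ : KGraph k) where
  deg : Fin k → ℕ∞
  toFun : ∀ p q : Fin k → ℕ, p ≤ q → (∀ i, (q i : ℕ∞) ≤ deg i) → Λ.Path
  d_toFun : ∀ p q h1 h2, Λ.d (toFun p q h1 h2) = q - p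
  comp_toFun : ∀ p q r (hpq : p ≤ q) (hqr : q ≤ r) (hpr : p ≤ r)
      (hr : ∀ i, (r i : ℕ∞) ≤ deg i) (hq : ∀ i, (q i : ℕ∞) ≤ deg i),
    ∃ hc : Λ.s (toFun p q hpq hq) = Λ.r (toFun q r hqr hr),
      Λ.comp _ _ hc = toFun p r hpr hr
  bdry : ∀ (p : Fin k → ℕ) (hp : ∀ i, (p i : ℕ∞) ≤ deg i) (i : Fin k),
    ¬ ((p i : ℕ∞) + 1 ≤ deg i) →
    Λ.degAt (KGraph.e k i) (Λ.r (toFun p p le_rfl hp)) = ∅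

namespace BPath

variable {k : ℕ} {Λ : KGraph k}

/-- The range of a boundary path. -/
def r (x : BPath Λ) : Λ.Obj :=
  Λ.r (x.toFun 0 0 le_rfl (fun i => by simp))

end BPath

/-- An infinite path: a graph morphism `x : Ω_k → Λ`. -/
structure InfPath {k : ℕ} (Λ : KGraph k) where
  toFun : ∀ p q : Fin k → ℕ, p ≤ q → Λ.Path
  d_toFun : ∀ p q h, Λ.d (toFun p q h) = q - p
  comp_toFun : ∀ p q r (hpq : p ≤ q) (hqr : q ≤ r) (hpr : p ≤ r),
    ∃ hc : Λ.s (toFun p q hpq) = Λ.r (toFun q r hqr),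
      Λ.comp _ _ hc = toFun p r hpr

namespace InfPath

variable {k : ℕ} {Λ : KGraph k}

/-- The range of an infinite path. -/
def r (x : InfPath Λ) : Λ.Obj := Λ.r (x.toFun 0 0 le_rfl)

/-- The shift `σ^p`. -/
def shift (p : Fin k → ℕ) (x : InfPath Λ) : InfPath Λ where
  toFun a b h := x.toFun (a + p) (b + p) (add_le_add_left h p)
  d_toFun a b h := by
    rw [x.d_toFun]
    funext i
    simp only [Pi.sub_apply, Pi.add_apply]
    omega
  comp_toFun a b c hab hbc hac :=
    x.comp_toFun (a + p) (b + p) (c + p) (add_le_add_left hab p)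
      (add_le_add_left hbc p) (add_le_add_left hac p)

end InfPath

/-!
The forward direction is the case `m = e_i`, because `Λ^{≤ e_i}(v) = Λ^{e_i}(v)` as soon as `v`
receives an edge of degree `e_i`. For the converse we induct on `m`. Composition
`(λ, ν) ↦ λν` maps the pairs with `λ ∈ Λ^{≤ n}(v)`, `ν ∈ Λ^{≤ e_i}(s λ)` bijectively onto
`Λ^{≤ n + e_i}(v)`: it is injective because `d λ = d (λν) ⊓ n`, and surjective by factorising
`τ` at `d τ ⊓ n`, where local convexity is needed. The edge relations give
`s_{s λ} = Σ_{ν ∈ Λ^{≤ e_i}(s λ)} s_ν s_ν*`, and substituting this into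
`s_λ s_λ* = s_λ s_{s λ} s_λ*` turns relation (4) for `n` into relation (4) for `n + e_i`.
-/

namespace KGraph

variable {k : ℕ}

section Degrees

variable {p q : Fin k → ℕ} {i j : Fin k}

lemma e_ne_zero (i : Fin k) : e k i ≠ 0 := by
  intro h
  simpa [e] using congrFun h i

lemma eq_of_e_le_e (h : e k j ≤ e k i) : j = i := by
  by_contra hji
  simpa [e, Pi.single_eq_of_ne hji] using h j

lemma le_e_iff : p ≤ e k i ↔ p = 0 ∨ p = e k i := by
  refine ⟨fun h => ?_, by rintro (rfl | rfl) <;> simp [e]⟩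
  by_cases hpi : p i = 0
  · left
    funext l
    by_cases hl : l = i
    · subst hl; exact hpi
    · simpa [e, hl] using h l
  · right
    funext l
    have := h l
    by_cases hl : l = i
    · subst hl
      simp only [e, Pi.single_eq_same] at this ⊢
      omega
    · simpa [e, hl] using this

lemma add_e_le_of_add_e_le_add_e (hpq : p ≤ q) (h : p + e k j ≤ q + e k i) (hji : j ≠ i) :
    p + e k j ≤ q := by
  intro l
  have h1 := hpq l
  have h2 := h l
  by_cases hl : l = i
  · subst hl; simp_all [e]
  · simp_all [e]

lemma add_e_inf_eq (hpq : p ≤ q) (h : ¬ p + e k i ≤ q) : (p + e k i) ⊓ q = p := by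
  have hpi : p i = q i := by
    by_contra hne
    refine h fun l => ?_
    have : p l ≤ q l := hpq l
    by_cases hl : l = i
    · subst hl
      simp only [Pi.add_apply, e, Pi.single_eq_same]
      omega
    · simp [e, hl, this]
  funext l
  by_cases hl : l = i
  · subst hl
    simp [e, hpi]
  · simp [e, hl, hpq l]

lemma sub_inf_le_e (h : p ≤ q + e k i) : p - p ⊓ q ≤ e k i := by
  intro l
  have := h l
  by_cases hl : l = i
  · subst hl
    simp only [Pi.add_apply, Pi.sub_apply, Pi.inf_apply, e, Pi.single_eq_same] at this ⊢
    omega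
  · simp only [Pi.add_apply, Pi.sub_apply, Pi.inf_apply, e, Pi.single_eq_of_ne hl] at this ⊢
    omega

lemma e_le_of_ne_zero (h : p i ≠ 0) : e k i ≤ p := by
  intro l
  by_cases hl : l = i
  · subst hl
    simp only [e, Pi.single_eq_same]
    omega
  · simp [e, hl]

lemma sub_e_lt_of_ne_zero (h : p i ≠ 0) : p - e k i < p :=
  Pi.lt_def.mpr ⟨tsub_le_self, i, by simp only [Pi.sub_apply, e, Pi.single_eq_same]; omega⟩

end Degrees

variable (Λ : KGraph k)

lemma eq_ι_of_d_eq_zero {lam : Λ.Path} (h : Λ.d lam = 0) : lam = Λ.ι (Λ.r lam) := by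
  obtain ⟨p, -, huniq⟩ := Λ.factor lam 0 0 (by simpa using h)
  have hleft : (Λ.ι (Λ.r lam), lam) = p :=
    huniq _ ⟨by rw [Λ.s_ι], Λ.comp_ι_left lam _, Λ.d_ι _, h⟩
  have hright : (lam, Λ.ι (Λ.s lam)) = p :=
    huniq _ ⟨by rw [Λ.r_ι], Λ.comp_ι_right lam _, h, Λ.d_ι _⟩
  exact congrArg Prod.fst (hleft.trans hright.symm) |>.symm

lemma s_eq_r_of_d_eq_zero {lam : Λ.Path} (h : Λ.d lam = 0) : Λ.s lam = Λ.r lam := by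
  rw [Λ.eq_ι_of_d_eq_zero h, Λ.s_ι, Λ.r_ι]

lemma comp_inj_of_d_eq {lam nu lam' nu' : Λ.Path} {h : Λ.s lam = Λ.r nu}
    {h' : Λ.s lam' = Λ.r nu'} (heq : Λ.comp lam nu h = Λ.comp lam' nu' h')
    (hd : Λ.d lam = Λ.d lam') : lam = lam' ∧ nu = nu' := by
  have hdnu : Λ.d nu = Λ.d nu' := by
    have := congrArg Λ.d heq
    rw [Λ.d_comp, Λ.d_comp, hd] at this
    exact add_left_cancel this
  obtain ⟨p, -, huniq⟩ := Λ.factor (Λ.comp lam nu h) (Λ.d lam) (Λ.d nu) (Λ.d_comp _ _ _)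
  have := (huniq (lam, nu) ⟨h, rfl, rfl, rfl⟩).trans
    (huniq (lam', nu') ⟨h', heq.symm, hd.symm, hdnu.symm⟩).symm
  exact Prod.ext_iff.mp this

lemma degAt_s_eq_empty_of_degAt_r_eq_empty {m : Fin k → ℕ} {nu : Λ.Path}
    (h : Λ.degAt m (Λ.r nu) = ∅) : Λ.degAt m (Λ.s nu) = ∅ := by
  refine Set.eq_empty_of_forall_notMem fun alpha ⟨hd, hr⟩ => ?_
  obtain ⟨⟨beta, gam⟩, ⟨hc, hcomp, hdb, -⟩, -⟩ :=
    Λ.factor (Λ.comp nu alpha hr.symm) m (Λ.d nu) (by rw [Λ.d_comp, hd, add_comm])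
  refine Set.eq_empty_iff_forall_notMem.mp h beta ⟨hdb, ?_⟩
  rw [← Λ.r_comp beta gam hc, hcomp, Λ.r_comp]

lemma leAt_finite (hrf : Λ.RowFinite) (m : Fin k → ℕ) (v : Λ.Obj) : (Λ.leAt m v).Finite := by
  refine ((Set.finite_Iic m).biUnion fun p _ => hrf v p).subset ?_
  rintro lam ⟨⟨hd, -⟩, hr⟩
  exact Set.mem_biUnion hd ⟨rfl, hr⟩

lemma leAt_zero (v : Λ.Obj) : Λ.leAt 0 v = {Λ.ι v} := by
  ext lam
  constructor
  · rintro ⟨⟨hd, -⟩, rfl⟩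
    exact Λ.eq_ι_of_d_eq_zero (le_antisymm hd bot_le)
  · rintro rfl
    refine ⟨⟨(Λ.d_ι v).le, fun i hi => ?_⟩, Λ.r_ι v⟩
    rw [Λ.d_ι, zero_add] at hi
    exact absurd (le_antisymm hi bot_le) (e_ne_zero i)

lemma mem_le_e_iff {i : Fin k} {nu : Λ.Path} :
    nu ∈ Λ.le (e k i) ↔ Λ.d nu = e k i ∨ (Λ.d nu = 0 ∧ Λ.degAt (e k i) (Λ.s nu) = ∅) := by
  constructor
  · rintro ⟨hd, hext⟩
    refine (le_e_iff.mp hd).symm.imp_right fun h0 => ⟨h0, hext i ?_⟩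
    rw [h0, zero_add]
  · rintro (he | ⟨h0, hempty⟩)
    · refine ⟨he.le, fun j hj => absurd ?_ (e_ne_zero j)⟩
      rw [he] at hj
      exact le_antisymm (le_of_add_le_add_left (hj.trans_eq (add_zero _).symm)) bot_le
    · refine ⟨h0 ▸ bot_le, fun j hj => ?_⟩
      rw [h0, zero_add] at hj
      rwa [eq_of_e_le_e hj]

lemma leAt_e_of_nonempty {i : Fin k} {v : Λ.Obj} (h : (Λ.degAt (e k i) v).Nonempty) :
    Λ.leAt (e k i) v = Λ.degAt (e k i) v := by
  ext nu
  simp only [leAt, degAt, Set.mem_ofPred_eq, mem_le_e_iff]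
  constructor
  · rintro ⟨he | ⟨h0, hempty⟩, hr⟩
    · exact ⟨he, hr⟩
    · rw [Λ.s_eq_r_of_d_eq_zero h0, hr] at hempty
      exact absurd hempty h.ne_empty
  · exact fun ⟨he, hr⟩ => ⟨Or.inl he, hr⟩

lemma leAt_e_of_eq_empty {i : Fin k} {v : Λ.Obj} (h : Λ.degAt (e k i) v = ∅) :
    Λ.leAt (e k i) v = {Λ.ι v} := by
  ext nu
  simp only [leAt, Set.mem_ofPred_eq, Set.mem_singleton_iff, mem_le_e_iff]
  constructor
  · rintro ⟨he | ⟨h0, -⟩, rfl⟩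
    · exact (Set.eq_empty_iff_forall_notMem.mp h nu ⟨he, rfl⟩).elim
    · exact Λ.eq_ι_of_d_eq_zero h0
  · rintro rfl
    exact ⟨Or.inr ⟨Λ.d_ι v, by rwa [Λ.s_ι]⟩, Λ.r_ι v⟩

noncomputable def concat (μ ν : Λ.Path) : Λ.Path :=
  open Classical in if h : Λ.s μ = Λ.r ν then Λ.comp μ ν h else μ

lemma concat_eq {μ ν : Λ.Path} (h : Λ.s μ = Λ.r ν) : Λ.concat μ ν = Λ.comp μ ν h := dif_pos h

section Extension

variable {Λ} {n : Fin k → ℕ} {i : Fin k} {v : Λ.Obj} {lam nu tau : Λ.Path}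

lemma d_eq_inf_of_mem_le (hlam : lam ∈ Λ.le n) (hnu : nu ∈ Λ.leAt (e k i) (Λ.s lam)) :
    Λ.d lam = (Λ.d lam + Λ.d nu) ⊓ n := by
  rcases Λ.mem_le_e_iff.mp hnu.1 with he | ⟨h0, -⟩
  · have hmax : ¬ Λ.d lam + e k i ≤ n := fun h =>
      Set.eq_empty_iff_forall_notMem.mp (hlam.2 i h) nu ⟨he, hnu.2⟩
    rw [he, add_e_inf_eq hlam.1 hmax]
  · rw [h0, add_zero, inf_of_le_left hlam.1]

lemma concat_mem_leAt_add_e (hlam : lam ∈ Λ.leAt n v) (hnu : nu ∈ Λ.leAt (e k i) (Λ.s lam)) :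
    Λ.concat lam nu ∈ Λ.leAt (n + e k i) v := by
  have hc : Λ.s lam = Λ.r nu := hnu.2.symm
  rw [Λ.concat_eq hc]
  refine ⟨⟨?_, fun j hj => ?_⟩, by rw [Λ.r_comp]; exact hlam.2⟩
  · rw [Λ.d_comp]
    exact add_le_add hlam.1.1 hnu.1.1
  rw [Λ.d_comp] at hj
  rw [Λ.s_comp]
  rcases Λ.mem_le_e_iff.mp hnu.1 with he | ⟨h0, hempty⟩
  · rw [he, add_right_comm] at hj
    refine Λ.degAt_s_eq_empty_of_degAt_r_eq_empty ?_
    rw [← hc]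
    exact hlam.1.2 j (le_of_add_le_add_right hj)
  · rw [h0, add_zero] at hj
    rw [Λ.s_eq_r_of_d_eq_zero h0, ← hc] at hempty ⊢
    by_cases hji : j = i
    · rwa [hji]
    · exact hlam.1.2 j (add_e_le_of_add_e_le_add_e hlam.1.1 hj hji)

lemma concat_inj {lam' nu' : Λ.Path} (hlam : lam ∈ Λ.leAt n v)
    (hnu : nu ∈ Λ.leAt (e k i) (Λ.s lam)) (hlam' : lam' ∈ Λ.leAt n v)
    (hnu' : nu' ∈ Λ.leAt (e k i) (Λ.s lam')) (heq : Λ.concat lam nu = Λ.concat lam' nu') :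
    lam = lam' ∧ nu = nu' := by
  have hc : Λ.s lam = Λ.r nu := hnu.2.symm
  have hc' : Λ.s lam' = Λ.r nu' := hnu'.2.symm
  rw [Λ.concat_eq hc, Λ.concat_eq hc'] at heq
  refine Λ.comp_inj_of_d_eq heq ?_
  rw [d_eq_inf_of_mem_le hlam.1 hnu, d_eq_inf_of_mem_le hlam'.1 hnu', ← Λ.d_comp _ _ hc, heq,
    Λ.d_comp]

lemma exists_concat_eq (hlc : Λ.LocallyConvex) (htau : tau ∈ Λ.leAt (n + e k i) v) :
    ∃ lam ∈ Λ.leAt n v, ∃ nu ∈ Λ.leAt (e k i) (Λ.s lam), Λ.concat lam nu = tau := by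
  obtain ⟨⟨lam, nu⟩, ⟨hc, hcomp, hdlam, hdnu⟩, -⟩ :=
    Λ.factor tau (Λ.d tau ⊓ n) (Λ.d tau - Λ.d tau ⊓ n) (add_tsub_cancel_of_le inf_le_left).symm
  dsimp only at hc hcomp hdlam hdnu
  have hsnu : Λ.s nu = Λ.s tau := by rw [← hcomp, Λ.s_comp]
  have hdtau : Λ.d tau = Λ.d lam + Λ.d nu := by rw [← hcomp, Λ.d_comp]
  have hnu_le : Λ.d nu ≤ e k i := hdnu ▸ sub_inf_le_e htau.1.1
  have htau_le (h0 : Λ.d nu = 0) : Λ.d tau ≤ n := by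
    rw [hdtau, h0, add_zero, hdlam]
    exact inf_le_right
  have hnu : nu ∈ Λ.le (e k i) := by
    rw [mem_le_e_iff]
    refine (le_e_iff.mp hnu_le).symm.imp_right fun h0 => ⟨h0, ?_⟩
    rw [hsnu]
    exact htau.1.2 i (add_le_add (htau_le h0) le_rfl)
  refine ⟨lam, ⟨⟨hdlam ▸ inf_le_right, fun j hj => ?_⟩, by rw [← htau.2, ← hcomp, Λ.r_comp]⟩,
    nu, ⟨hnu, hc.symm⟩, by rw [Λ.concat_eq hc, hcomp]⟩
  rcases le_e_iff.mp hnu_le with h0 | he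
  · rw [hc, ← Λ.s_eq_r_of_d_eq_zero h0, hsnu]
    refine htau.1.2 j ?_
    rw [hdtau, h0, add_zero]
    exact hj.trans le_self_add
  by_cases hji : j = i
  · subst hji
    have hle : Λ.d tau ≤ n := by rwa [hdtau, he]
    rw [inf_of_le_left hle, hdtau, he] at hdlam
    exact absurd (left_eq_add.mp hdlam) (e_ne_zero j)
  · refine Set.eq_empty_of_forall_notMem fun alpha halpha => ?_
    -- local convexity at `s lam` yields an edge of degree `e_j` at `s nu = s tau`
    have hext := (hlc (Λ.s lam) i j (Ne.symm hji) nu alpha ⟨he, hc.symm⟩ halpha).1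
    rw [hsnu] at hext
    refine hext.ne_empty (htau.1.2 j ?_)
    rw [hdtau, he, add_right_comm]
    exact add_le_add hj le_rfl

lemma leAt_add_e_eq_biUnion (hlc : Λ.LocallyConvex) :
    Λ.leAt (n + e k i) v = ⋃ lam ∈ Λ.leAt n v, Λ.concat lam '' Λ.leAt (e k i) (Λ.s lam) := by
  ext tau
  simp only [Set.mem_iUnion, Set.mem_image, exists_prop]
  constructor
  · exact exists_concat_eq hlc
  · rintro ⟨lam, hlam, nu, hnu, rfl⟩
    exact concat_mem_leAt_add_e hlam hnu

lemma pairwiseDisjoint_image_concat :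
    (Λ.leAt n v).PairwiseDisjoint fun lam => Λ.concat lam '' Λ.leAt (e k i) (Λ.s lam) := by
  intro lam hlam lam' hlam' hne
  refine Set.disjoint_left.mpr ?_
  rintro _ ⟨nu, hnu, rfl⟩ ⟨nu', hnu', heq⟩
  exact hne (concat_inj hlam hnu hlam' hnu' heq.symm).1

lemma injOn_concat (hlam : lam ∈ Λ.leAt n v) :
    (Λ.leAt (e k i) (Λ.s lam)).InjOn (Λ.concat lam) :=
  fun _ hnu _ hnu' heq => (concat_inj hlam hnu hlam hnu' heq).2

end Extension

section CuntzKrieger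

variable {Λ} {A : Type} [Ring A] [StarRing A] {S : Λ.Path → A}

lemma mul_star_eq_finsum_concat (hS : Λ.IsCK13 S) {lam : Λ.Path} {F : Set Λ.Path}
    (hF : F.Finite) (hr : ∀ nu ∈ F, Λ.r nu = Λ.s lam)
    (hsum : S (Λ.ι (Λ.s lam)) = ∑ᶠ nu ∈ F, S nu * star (S nu)) :
    S lam * star (S lam) = ∑ᶠ nu ∈ F, S (Λ.concat lam nu) * star (S (Λ.concat lam nu)) := by
  have hsrc : S lam * S (Λ.ι (Λ.s lam)) = S lam := by
    rw [← hS.mul lam _ (Λ.r_ι _).symm, Λ.comp_ι_right]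
  calc S lam * star (S lam) = S lam * S (Λ.ι (Λ.s lam)) * star (S lam) := by rw [hsrc]
    _ = ∑ᶠ nu ∈ F, S lam * (S nu * star (S nu)) * star (S lam) := by
      rw [hsum, mul_finsum_mem' _ _ hF, finsum_mem_mul' _ _ hF]
    _ = ∑ᶠ nu ∈ F, S (Λ.concat lam nu) * star (S (Λ.concat lam nu)) := by
      refine finsum_mem_congr rfl fun nu hnu => ?_
      rw [Λ.concat_eq (hr nu hnu).symm, hS.mul, star_mul]
      simp only [mul_assoc]

lemma finsum_leAt_zero (hS : Λ.IsCK13 S) (v : Λ.Obj) :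
    S (Λ.ι v) = ∑ᶠ lam ∈ Λ.leAt 0 v, S lam * star (S lam) := by
  rw [leAt_zero, finsum_mem_singleton, hS.selfadj, hS.proj]

lemma finsum_leAt_e (hS : Λ.IsCK13 S) {i : Fin k}
    (hedge : ∀ v, (Λ.degAt (e k i) v).Nonempty →
      S (Λ.ι v) = ∑ᶠ lam ∈ Λ.degAt (e k i) v, S lam * star (S lam)) (v : Λ.Obj) :
    S (Λ.ι v) = ∑ᶠ lam ∈ Λ.leAt (e k i) v, S lam * star (S lam) := by
  rcases (Λ.degAt (e k i) v).eq_empty_or_nonempty with hempty | hne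
  · rw [Λ.leAt_e_of_eq_empty hempty, finsum_mem_singleton, hS.selfadj, hS.proj]
  · rw [Λ.leAt_e_of_nonempty hne]
    exact hedge v hne

lemma finsum_leAt_add_e (hlc : Λ.LocallyConvex) (hrf : Λ.RowFinite) (hS : Λ.IsCK13 S)
    {n : Fin k → ℕ} {i : Fin k} {v : Λ.Obj}
    (hedge : ∀ w, S (Λ.ι w) = ∑ᶠ nu ∈ Λ.leAt (e k i) w, S nu * star (S nu))
    (hn : S (Λ.ι v) = ∑ᶠ lam ∈ Λ.leAt n v, S lam * star (S lam)) :
    S (Λ.ι v) = ∑ᶠ tau ∈ Λ.leAt (n + e k i) v, S tau * star (S tau) := by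
  rw [leAt_add_e_eq_biUnion hlc, finsum_mem_biUnion pairwiseDisjoint_image_concat
    (Λ.leAt_finite hrf n v) fun lam _ => (Λ.leAt_finite hrf _ _).image _, hn]
  refine finsum_mem_congr rfl fun lam hlam => ?_
  rw [finsum_mem_image (injOn_concat hlam)]
  exact mul_star_eq_finsum_concat hS (Λ.leAt_finite hrf _ _) (fun _ hnu => hnu.2) (hedge _)

theorem finsum_leAt_of_edge (hlc : Λ.LocallyConvex) (hrf : Λ.RowFinite) (hS : Λ.IsCK13 S)
    (hedge : ∀ v i, (Λ.degAt (e k i) v).Nonempty →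
      S (Λ.ι v) = ∑ᶠ lam ∈ Λ.degAt (e k i) v, S lam * star (S lam))
    (m : Fin k → ℕ) (v : Λ.Obj) :
    S (Λ.ι v) = ∑ᶠ lam ∈ Λ.leAt m v, S lam * star (S lam) := by
  induction m using WellFoundedLT.induction generalizing v with
  | _ m ih =>
  by_cases hm : m = 0
  · rw [hm]
    exact finsum_leAt_zero hS v
  obtain ⟨i, hi⟩ : ∃ i, m i ≠ 0 := by
    by_contra! h
    exact hm (funext h)
  rw [← tsub_add_cancel_of_le (e_le_of_ne_zero hi)]
  exact finsum_leAt_add_e hlc hrf hS (finsum_leAt_e hS (hedge · i))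
    (ih _ (sub_e_lt_of_ne_zero hi) v)

end CuntzKrieger

end KGraph

/-- for a locally convex row-finite `k`-graph and a family of
partial isometries satisfying Cuntz-Krieger relations (1)-(3), relation (4)
holds iff the edge relations hold. -/
theorem stmt10 {k : ℕ} (Λ : KGraph k) (hlc : Λ.LocallyConvex) (hrf : Λ.RowFinite)
    {A : Type} [Ring A] [StarRing A] (S : Λ.Path → A) (h13 : Λ.IsCK13 S) :
    (∀ (v : Λ.Obj) (m : Fin k → ℕ),
        S (Λ.ι v) = ∑ᶠ lam ∈ Λ.leAt m v, S lam * star (S lam)) ↔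
    (∀ (v : Λ.Obj) (i : Fin k), (Λ.degAt (KGraph.e k i) v).Nonempty →
        S (Λ.ι v) = ∑ᶠ lam ∈ Λ.degAt (KGraph.e k i) v, S lam * star (S lam)) := by
  refine ⟨fun h4 v i hne => ?_, fun hedge v m => KGraph.finsum_leAt_of_edge hlc hrf h13 hedge m v⟩
  rw [← Λ.leAt_e_of_nonempty hne]
  exact h4 v (KGraph.e k i)
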